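/- arXiv:math/9703211 — 2 statements merged into one kernel-verified Lean document; each statement's English description precedes it below -/
import Mathlib

section
/- Any elementary boundary trail crossing exactly m bridges and exactly n lakes satisfies (m,n) ∈ {(4,0), (3,0), (2,1), (1,2), (0,2), (0,3), (0,4)}. -/
/-!
A lake misses exactly one island, distinct lakes miss distinct islands, and every bridge of the
trail contains every island missed by a lake (otherwise it would lie in that lake). So there are
at most four lakes, at most two once there is a bridge, and with two lakes the only possible
bridge is the pair of missed islands. A closed trail passes through each island an even number
of times. With one lake, the steps through its missed island are exactly the bridges, all of
which contain it: an even number, at most three, hence two. With no lake, an island lies on at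
most three bridges, so it is visited at most once: at most four steps, and two steps would cross
the same bridge twice.
-/

/-- An elementary boundary trail on the four islands `Fin 4`: a nonempty cyclic
sequence of `n + 1` steps.  Step `i` goes from island `src i` to island
`src (i + 1)` (indices cyclic, via `Fin (n+1)` addition) and carries a label
`label i`, which is a bridge (a 2-element subset of `Fin 4`) when
`isBridge i = true` and a lake (a 3-element subset of `Fin 4`) when
`isBridge i = false`.  Each step joins two distinct islands of its label,
distinct steps carry distinct labels, and no bridge label occurring in the
trail is contained in a lake label occurring in the trail. -/
structure ElemBoundaryTrail where
  /-- the trail has `n + 1` steps -/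
  n : ℕ
  /-- the island at which step `i` starts (step `i` ends at `src (i + 1)`) -/
  src : Fin (n + 1) → Fin 4
  /-- whether step `i` is labeled by a bridge (`true`) or by a lake (`false`) -/
  isBridge : Fin (n + 1) → Bool
  /-- the label of step `i`, a subset of the islands -/
  label : Fin (n + 1) → Finset (Fin 4)
  /-- a bridge is a 2-element subset of the islands -/
  bridge_card : ∀ i, isBridge i = true → (label i).card = 2
  /-- a lake is a 3-element subset of the islands -/
  lake_card : ∀ i, isBridge i = false → (label i).card = 3
  /-- each step starts at an island of its label -/
  src_mem : ∀ i, src i ∈ label i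
  /-- each step ends at an island of its label -/
  dst_mem : ∀ i, src (i + 1) ∈ label i
  /-- each step joins two distinct islands -/
  step_ne : ∀ i, src i ≠ src (i + 1)
  /-- distinct steps carry distinct labels -/
  label_injective : Function.Injective label
  /-- no bridge label of the trail is contained in a lake label of the trail -/
  no_bridge_in_lake : ∀ i j, isBridge i = true → isBridge j = false →
    ¬ label i ⊆ label j

/-- The number of bridges crossed by the trail (each at most once, since
labels are distinct). -/
def ElemBoundaryTrail.bridgeCount (T : ElemBoundaryTrail) : ℕ :=
  (Finset.univ.filter fun i => T.isBridge i = true).card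

/-- The number of lakes crossed by the trail (each at most once, since
labels are distinct). -/
def ElemBoundaryTrail.lakeCount (T : ElemBoundaryTrail) : ℕ :=
  (Finset.univ.filter fun i => T.isBridge i = false).card

namespace ElemBoundaryTrail

open Finset

variable (T : ElemBoundaryTrail) {i j : Fin (T.n + 1)}

def bridges : Finset (Fin (T.n + 1)) := univ.filter fun i => T.isBridge i = true

def lakes : Finset (Fin (T.n + 1)) := univ.filter fun i => T.isBridge i = false

@[simp] lemma mem_bridges : i ∈ T.bridges ↔ T.isBridge i = true := by simp [bridges]

@[simp] lemma mem_lakes : i ∈ T.lakes ↔ T.isBridge i = false := by simp [lakes]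

lemma lakeCount_eq_card_lakes : T.lakeCount = #T.lakes := rfl

lemma bridgeCount_add_lakeCount : T.bridgeCount + T.lakeCount = T.n + 1 := by
  simpa [bridgeCount, lakeCount] using
    card_filter_add_card_filter_not (s := univ) (fun i => T.isBridge i = true)

lemma n_pos : 0 < T.n := by
  by_contra! h
  have : Subsingleton (Fin (T.n + 1)) := Fin.subsingleton_iff_le_one.mpr (by omega)
  exact T.step_ne 0 (congrArg T.src (Subsingleton.elim _ _))

lemma label_eq_pair (hi : T.isBridge i = true) : T.label i = {T.src i, T.src (i + 1)} :=
  (eq_of_subset_of_card_le (insert_subset (T.src_mem i) (singleton_subset_iff.mpr (T.dst_mem i)))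
    (by rw [T.bridge_card i hi, card_pair (T.step_ne i)])).symm

lemma compl_label_nonempty (i : Fin (T.n + 1)) : (T.label i)ᶜ.Nonempty := by
  have : #(T.label i) ≤ 3 := by
    cases h : T.isBridge i
    · exact (T.lake_card i h).le
    · exact (T.bridge_card i h).trans_le (by norm_num)
  rw [← card_pos, card_compl, Fintype.card_fin]
  omega

/-- The island off a lake; for a bridge, some island off it. -/
def missing (j : Fin (T.n + 1)) : Fin 4 := (T.label j)ᶜ.min' (T.compl_label_nonempty j)

lemma missing_notMem_label (j : Fin (T.n + 1)) : T.missing j ∉ T.label j :=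
  mem_compl.mp (min'_mem _ _)

lemma label_eq_compl_missing (hj : T.isBridge j = false) : T.label j = {T.missing j}ᶜ :=
  eq_of_subset_of_card_le (subset_compl_singleton.mpr (T.missing_notMem_label j))
    (by simp [card_compl, T.lake_card j hj])

lemma missing_mem_label (hi : T.isBridge i = true) (hj : T.isBridge j = false) :
    T.missing j ∈ T.label i := by
  by_contra h
  exact T.no_bridge_in_lake i j hi hj
    (T.label_eq_compl_missing hj ▸ subset_compl_singleton.mpr h)

lemma missing_injOn : Set.InjOn T.missing T.lakes := fun j₁ hj₁ j₂ hj₂ h =>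
  T.label_injective <| by
    rw [T.label_eq_compl_missing (T.mem_lakes.mp hj₁),
      T.label_eq_compl_missing (T.mem_lakes.mp hj₂), h]

lemma lakeCount_le_four : T.lakeCount ≤ 4 := by
  rw [lakeCount_eq_card_lakes]
  simpa using
    card_le_card_of_injOn (t := univ) T.missing (fun _ _ => mem_univ _) T.missing_injOn

lemma lakeCount_le_two_of_bridgeCount_pos (h : 0 < T.bridgeCount) : T.lakeCount ≤ 2 := by
  obtain ⟨i, hi⟩ : T.bridges.Nonempty := card_pos.mp h
  rw [← T.bridge_card i (T.mem_bridges.mp hi)]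
  exact card_le_card_of_injOn T.missing
    (fun j hj => T.missing_mem_label (T.mem_bridges.mp hi) (T.mem_lakes.mp hj)) T.missing_injOn

lemma bridgeCount_le_one_of_lakeCount_eq_two (h : T.lakeCount = 2) : T.bridgeCount ≤ 1 := by
  obtain ⟨j₁, j₂, hne, hlakes⟩ : ∃ j₁ j₂, j₁ ≠ j₂ ∧ T.lakes = {j₁, j₂} :=
    card_eq_two.mp h
  have hj₁ : j₁ ∈ T.lakes := by simp [hlakes]
  have hj₂ : j₂ ∈ T.lakes := by simp [hlakes]
  have hlabel : ∀ i ∈ T.bridges, T.label i = {T.missing j₁, T.missing j₂} := by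
    intro i hi
    rw [mem_bridges] at hi
    refine (eq_of_subset_of_card_le ?_ ?_).symm
    · exact insert_subset (T.missing_mem_label hi (T.mem_lakes.mp hj₁))
        (singleton_subset_iff.mpr (T.missing_mem_label hi (T.mem_lakes.mp hj₂)))
    · rw [T.bridge_card i hi, card_pair fun h => hne (T.missing_injOn hj₁ hj₂ h)]
  exact card_le_one.mpr fun a ha b hb => T.label_injective (by rw [hlabel a ha, hlabel b hb])

/-- Each visit to `v` is entered by one step and left by another. -/
lemma two_mul_card_src_eq (v : Fin 4) :
    2 * #{i | T.src i = v} = #{i | T.src i = v ∨ T.src (i + 1) = v} := by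
  have hshift : #{i | T.src (i + 1) = v} = #{i | T.src i = v} := by
    simp only [card_filter]
    exact Equiv.sum_comp (Equiv.addRight 1) fun i => if T.src i = v then 1 else 0
  rw [filter_or, card_union_eq_card_add_card.mpr
    (disjoint_filter.mpr fun i _ h h' => T.step_ne i (h.trans h'.symm)), hshift, two_mul]

lemma two_mul_card_src_eq_card_bridges (v : Fin 4)
    (hv : ∀ j, T.isBridge j = false → v ∉ T.label j) :
    2 * #{i | T.src i = v} = #{i ∈ T.bridges | v ∈ T.label i} := by
  rw [two_mul_card_src_eq, bridges, filter_filter]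
  congr 1
  ext i
  cases h : T.isBridge i
  · simp only [mem_filter, mem_univ, true_and, h, Bool.false_eq_true, false_and, iff_false, not_or]
    exact ⟨fun hs => hv i h (hs ▸ T.src_mem i), fun hs => hv i h (hs ▸ T.dst_mem i)⟩
  · simp [T.label_eq_pair h, h, @eq_comm _ v]

lemma card_bridges_mem_le_three (v : Fin 4) : #{i ∈ T.bridges | v ∈ T.label i} ≤ 3 := by
  calc #{i ∈ T.bridges | v ∈ T.label i}
      ≤ #{s ∈ powersetCard 2 (univ : Finset (Fin 4)) | v ∈ s} :=
        card_le_card_of_injOn T.label (fun i hi => by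
          simp only [mem_coe, mem_filter, mem_bridges, mem_powersetCard] at hi ⊢
          exact ⟨⟨subset_univ _, T.bridge_card i hi.1⟩, hi.2⟩) T.label_injective.injOn
    _ = 3 := by revert v; decide

lemma isBridge_of_lakeCount_eq_zero (h : T.lakeCount = 0) (i : Fin (T.n + 1)) :
    T.isBridge i = true := by
  simpa using filter_eq_empty_iff.mp (card_eq_zero.mp h) (mem_univ i)

lemma n_le_three_of_lakeCount_eq_zero (h : T.lakeCount = 0) : T.n ≤ 3 := by
  have hsrc : T.src.Injective := fun i₁ i₂ hi => by
    have hvisit : #{i | T.src i = T.src i₁} ≤ 1 := by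
      have := T.two_mul_card_src_eq_card_bridges (T.src i₁) fun j hj => by
        simp [T.isBridge_of_lakeCount_eq_zero h j] at hj
      have := T.card_bridges_mem_le_three (T.src i₁)
      omega
    exact card_le_one.mp hvisit i₁ (by simp) i₂ (by simp [hi])
  simpa [Nat.lt_succ_iff] using Fintype.card_le_of_injective _ hsrc

lemma n_ne_one_of_lakeCount_eq_zero (h : T.lakeCount = 0) : T.n ≠ 1 := by
  intro hn
  have h01 : (0 : Fin (T.n + 1)) ≠ 1 := by simp [Fin.ext_iff, hn]
  have h11 : (1 : Fin (T.n + 1)) + 1 = 0 := by ext; simp [Fin.val_add, hn]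
  apply h01 (T.label_injective _)
  rw [T.label_eq_pair (T.isBridge_of_lakeCount_eq_zero h 0),
    T.label_eq_pair (T.isBridge_of_lakeCount_eq_zero h 1),
    zero_add, h11, pair_comm]

lemma bridgeCount_eq_two_of_lakeCount_eq_one (h : T.lakeCount = 1) : T.bridgeCount = 2 := by
  obtain ⟨j, hlakes⟩ : ∃ j, T.lakes = {j} := card_eq_one.mp h
  have hj : T.isBridge j = false := T.mem_lakes.mp (by simp [hlakes])
  have hbridges : #{i ∈ T.bridges | T.missing j ∈ T.label i} = T.bridgeCount :=
    congrArg card (filter_true_of_mem fun i hi => T.missing_mem_label (T.mem_bridges.mp hi) hj)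
  have heven := T.two_mul_card_src_eq_card_bridges (T.missing j) fun j' hj' =>
    (mem_singleton.mp (hlakes ▸ T.mem_lakes.mpr hj') : j' = j) ▸ T.missing_notMem_label j
  have hle := T.card_bridges_mem_le_three (T.missing j)
  have hsteps := T.bridgeCount_add_lakeCount
  have hn := T.n_pos
  omega

end ElemBoundaryTrail

/-- Any elementary boundary trail crossing exactly `m` bridges and exactly `n`
lakes satisfies `(m, n) ∈ {(4,0), (3,0), (2,1), (1,2), (0,2), (0,3), (0,4)}`. -/
theorem elemBoundaryTrail_type_mem (T : ElemBoundaryTrail) :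
    (T.bridgeCount, T.lakeCount) ∈
      ({(4, 0), (3, 0), (2, 1), (1, 2), (0, 2), (0, 3), (0, 4)} :
        Finset (ℕ × ℕ)) := by
  have hsteps := T.bridgeCount_add_lakeCount
  have hn := T.n_pos
  have hlakes := T.lakeCount_le_four
  have hbridge := T.lakeCount_le_two_of_bridgeCount_pos
  have hl₀ := T.n_le_three_of_lakeCount_eq_zero
  have hl₀' := T.n_ne_one_of_lakeCount_eq_zero
  have hl₁ := T.bridgeCount_eq_two_of_lakeCount_eq_one
  have hl₂ := T.bridgeCount_le_one_of_lakeCount_eq_two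
  simp only [Finset.mem_insert, Finset.mem_singleton, Prod.mk.injEq]
  omega
end

section
/- For each pair (m,n) in the set {(4,0), (3,0), (2,1), (1,2), (0,2), (0,3), (0,4)} there exists an elementary boundary trail crossing exactly m bridges and exactly n lakes. -/
namespace ElemBoundaryTrail

def ofDecide (n : ℕ) (src : Fin (n + 1) → Fin 4) (isBridge : Fin (n + 1) → Bool)
    (label : Fin (n + 1) → Finset (Fin 4))
    (bridge_card : ∀ i, isBridge i = true → (label i).card = 2 := by decide)
    (lake_card : ∀ i, isBridge i = false → (label i).card = 3 := by decide)
    (src_mem : ∀ i, src i ∈ label i := by decide)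
    (dst_mem : ∀ i, src (i + 1) ∈ label i := by decide)
    (step_ne : ∀ i, src i ≠ src (i + 1) := by decide)
    (label_injective : Function.Injective label := by decide)
    (no_bridge_in_lake : ∀ i j, isBridge i = true → isBridge j = false →
      ¬ label i ⊆ label j := by decide) :
    ElemBoundaryTrail :=
  ⟨n, src, isBridge, label, bridge_card, lake_card, src_mem, dst_mem, step_ne,
    label_injective, no_bridge_in_lake⟩

def fourBridges : ElemBoundaryTrail :=
  ofDecide 3 ![0, 1, 2, 3] ![true, true, true, true] ![{0, 1}, {1, 2}, {2, 3}, {3, 0}]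

def threeBridges : ElemBoundaryTrail :=
  ofDecide 2 ![0, 1, 2] ![true, true, true] ![{0, 1}, {1, 2}, {0, 2}]

def twoBridgesOneLake : ElemBoundaryTrail :=
  ofDecide 2 ![0, 1, 2] ![true, true, false] ![{0, 1}, {1, 2}, {0, 2, 3}]

def oneBridgeTwoLakes : ElemBoundaryTrail :=
  ofDecide 2 ![0, 1, 2] ![true, false, false] ![{0, 1}, {1, 2, 3}, {0, 2, 3}]

def twoLakes : ElemBoundaryTrail :=
  ofDecide 1 ![0, 1] ![false, false] ![{0, 1, 2}, {0, 1, 3}]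

def threeLakes : ElemBoundaryTrail :=
  ofDecide 2 ![0, 1, 2] ![false, false, false] ![{0, 1, 2}, {1, 2, 3}, {0, 2, 3}]

def fourLakes : ElemBoundaryTrail :=
  ofDecide 3 ![0, 1, 2, 3] ![false, false, false, false]
    ![{0, 1, 2}, {1, 2, 3}, {2, 3, 0}, {3, 0, 1}]

end ElemBoundaryTrail

open ElemBoundaryTrail in
/-- For each pair `(m, n)` in `{(4,0), (3,0), (2,1), (1,2), (0,2), (0,3), (0,4)}`
there exists an elementary boundary trail crossing exactly `m` bridges and
exactly `n` lakes. -/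
theorem elemBoundaryTrail_type_realizable :
    ∀ p ∈ ({(4, 0), (3, 0), (2, 1), (1, 2), (0, 2), (0, 3), (0, 4)} :
        Finset (ℕ × ℕ)),
      ∃ T : ElemBoundaryTrail, T.bridgeCount = p.1 ∧ T.lakeCount = p.2 := by
  intro p hp
  fin_cases hp
  exacts [⟨fourBridges, rfl, rfl⟩, ⟨threeBridges, rfl, rfl⟩, ⟨twoBridgesOneLake, rfl, rfl⟩,
    ⟨oneBridgeTwoLakes, rfl, rfl⟩, ⟨twoLakes, rfl, rfl⟩, ⟨threeLakes, rfl, rfl⟩,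
    ⟨fourLakes, rfl, rfl⟩]
end
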